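/- Let G and H be connected graphs, f₁ = (A₀,A₁,A₂,A₃) a minimum-weight RDRD-function of G and f₂ = (B₀,B₁,B₂,B₃) a minimum-weight RDRD-function of H (where Aᵢ, Bᵢ are the sets of vertices assigned value i). Then γ_rdR(G ⊠ H) ≤ γ_rdR(G)·γ_rdR(H) − 6|A₃||B₃| − 3|A₃||B₂| − 2|A₃||B₁| − 3|A₂||B₃| − 2|A₂||B₂| − |A₂||B₁| − |A₁||B₂| − 2|A₁||B₃|. -/

import Mathlib

open SimpleGraph Finset

/-- A restrained double Roman dominating function. -/
def IsRDRD {α : Type*} (G : SimpleGraph α) (f : α → ℕ) : Prop :=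
  (∀ v, f v ≤ 3) ∧
  (∀ v, f v = 0 →
    (∃ u, G.Adj v u ∧ f u = 3) ∨
    (∃ u w, u ≠ w ∧ G.Adj v u ∧ G.Adj v w ∧ f u = 2 ∧ f w = 2)) ∧
  (∀ v, f v = 1 → ∃ u, G.Adj v u ∧ 2 ≤ f u) ∧
  (∀ v, f v = 0 → ∃ u, G.Adj v u ∧ f u = 0)

/-- The restrained double Roman domination number. -/
noncomputable def gammaRdR {α : Type*} (G : SimpleGraph α) [Fintype α] : ℕ :=
  sInf {w | ∃ f, IsRDRD G f ∧ ∑ v, f v = w}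

/-- The strong product of two simple graphs. -/
def strongProd {α β : Type*} (G : SimpleGraph α) (H : SimpleGraph β) :
    SimpleGraph (α × β) where
  Adj p q := p ≠ q ∧ (G.Adj p.1 q.1 ∨ p.1 = q.1) ∧ (H.Adj p.2 q.2 ∨ p.2 = q.2)
  symm := by
    constructor
    rintro p q ⟨h1, h2, h3⟩
    exact ⟨h1.symm, h2.imp (fun h => G.symm.symm _ _ h) Eq.symm, h3.imp (fun h => H.symm.symm _ _ h) Eq.symm⟩
  loopless := by constructor; rintro p ⟨h1, _⟩; exact h1 rfl

/-- The cardinal (direct/tensor) product of two simple graphs. -/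
def cardProd {α β : Type*} (G : SimpleGraph α) (H : SimpleGraph β) :
    SimpleGraph (α × β) where
  Adj p q := G.Adj p.1 q.1 ∧ H.Adj p.2 q.2
  symm := by constructor; rintro p q ⟨h1, h2⟩; exact ⟨h1.symm, h2.symm⟩
  loopless := by constructor; rintro p ⟨h1, _⟩; exact G.loopless.irrefl _ h1

/-- The corona of two simple graphs. -/
def corona {α β : Type*} (G : SimpleGraph α) (H : SimpleGraph β) :
    SimpleGraph (α ⊕ α × β) where
  Adj x y :=
    match x, y with
    | .inl u, .inl v => G.Adj u v
    | .inl u, .inr (v, _) => u = v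
    | .inr (v, _), .inl u => u = v
    | .inr (u, a), .inr (v, b) => u = v ∧ H.Adj a b
  symm := by
    constructor
    rintro (u | ⟨u, a⟩) (v | ⟨v, b⟩) h
    · exact h.symm
    · exact h
    · exact h
    · exact ⟨h.1.symm, h.2.symm⟩
  loopless := by
    constructor
    rintro (u | ⟨u, a⟩) h
    · exact G.loopless.irrefl _ h
    · exact H.loopless.irrefl _ h.2

/-!
Combine the labels of `f₁` and `f₂` into the label of `(u, v)` that is `0` if either label is `0`,
`1` if either is `1`, and the larger of the two otherwise. This is an RDRD-function of `G ⊠ H`: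
a vertex `(u, v)` with `f₁ u = 0` is defended by the defenders of `u` in the layer of a vertex
`v'` of the closed neighbourhood of `v` with `f₂ v' ≥ 2`, and the `0`-neighbour of `u` gives a
`0`-neighbour of `(u, v)` in the layer of `v`. Its weight differs from `f₁(V(G)) · f₂(V(H))` by
`∑ |Aᵢ| |Bⱼ| (i j - label(i, j))`, which is the subtracted term.
-/

section Defended

variable {V W : Type*} {G : SimpleGraph V} {K : SimpleGraph W}

def DoubleRomanDefended (G : SimpleGraph V) (f : V → ℕ) (v : V) : Prop :=
  (∃ u, G.Adj v u ∧ f u = 3) ∨ (∃ u w, u ≠ w ∧ G.Adj v u ∧ G.Adj v w ∧ f u = 2 ∧ f w = 2)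

lemma DoubleRomanDefended.map {f : V → ℕ} {F : W → ℕ} {u : V} {p : W} (φ : V → W)
    (hφ : Function.Injective φ) (hadj : ∀ u', G.Adj u u' → K.Adj p (φ u'))
    (hval : ∀ u', 2 ≤ f u' → f u' ≤ F (φ u') ∧ F (φ u') ≤ 3)
    (h : DoubleRomanDefended G f u) : DoubleRomanDefended K F p := by
  rcases h with ⟨u', hu', h3⟩ | ⟨u₁, u₂, hne, hu₁, hu₂, h₁, h₂⟩
  · have := hval u' (by omega)
    exact .inl ⟨φ u', hadj u' hu', by omega⟩
  · have := hval u₁ (by omega)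
    have := hval u₂ (by omega)
    by_cases h₁' : F (φ u₁) = 3
    · exact .inl ⟨φ u₁, hadj u₁ hu₁, h₁'⟩
    by_cases h₂' : F (φ u₂) = 3
    · exact .inl ⟨φ u₂, hadj u₂ hu₂, h₂'⟩
    exact .inr ⟨φ u₁, φ u₂, hφ.ne hne, hadj u₁ hu₁, hadj u₂ hu₂, by omega, by omega⟩

end Defended

namespace IsRDRD

variable {α : Type*} {G : SimpleGraph α} {f : α → ℕ}

lemma lt_four (hf : IsRDRD G f) (v : α) : f v < 4 :=
  Nat.lt_succ_of_le (hf.1 v)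

lemma defended (hf : IsRDRD G f) {v : α} (hv : f v = 0) : DoubleRomanDefended G f v :=
  hf.2.1 v hv

lemma exists_adj_or_eq_two_le (hf : IsRDRD G f) (v : α) :
    ∃ u, (G.Adj v u ∨ v = u) ∧ 2 ≤ f u := by
  obtain ⟨-, h0, h1, -⟩ := hf
  by_cases hv : 2 ≤ f v
  · exact ⟨v, .inr rfl, hv⟩
  obtain hv | hv : f v = 0 ∨ f v = 1 := by omega
  · rcases h0 v hv with ⟨u, hu, h3⟩ | ⟨u, -, -, hu, -, h2, -⟩
    · exact ⟨u, .inl hu, by omega⟩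
    · exact ⟨u, .inl hu, by omega⟩
  · obtain ⟨u, hu, h2⟩ := h1 v hv
    exact ⟨u, .inl hu, h2⟩

end IsRDRD

lemma gammaRdR_le {α : Type*} [Fintype α] {G : SimpleGraph α} {f : α → ℕ} (hf : IsRDRD G f) :
    gammaRdR G ≤ ∑ v, f v :=
  Nat.sInf_le ⟨f, hf, rfl⟩

section StrongProd

variable {α β : Type*} {G : SimpleGraph α} {H : SimpleGraph β} {u u' : α} {v v' : β}

lemma strongProd_adj_of_adj_left (hu : G.Adj u u') (hv : H.Adj v v' ∨ v = v') :
    (strongProd G H).Adj (u, v) (u', v') :=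
  ⟨fun h => hu.ne (congrArg Prod.fst h), .inl hu, hv⟩

lemma strongProd_adj_of_adj_right (hu : G.Adj u u' ∨ u = u') (hv : H.Adj v v') :
    (strongProd G H).Adj (u, v) (u', v') :=
  ⟨fun h => hv.ne (congrArg Prod.snd h), hu, .inl hv⟩

end StrongProd

def prodLabel (a b : ℕ) : ℕ :=
  if a = 0 ∨ b = 0 then 0 else if a = 1 ∨ b = 1 then 1 else max a b

namespace prodLabel

variable {a b : ℕ}

lemma le_three (ha : a ≤ 3) (hb : b ≤ 3) : prodLabel a b ≤ 3 := by
  unfold prodLabel; split_ifs <;> omega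

lemma eq_zero_iff : prodLabel a b = 0 ↔ a = 0 ∨ b = 0 := by
  unfold prodLabel; split_ifs <;> grind

lemma eq_one (h : prodLabel a b = 1) : a = 1 ∨ b = 1 := by
  unfold prodLabel at h; split_ifs at h <;> omega

lemma eq_max (ha : 2 ≤ a) (hb : 2 ≤ b) : prodLabel a b = max a b := by
  unfold prodLabel; split_ifs <;> omega

end prodLabel

namespace IsRDRD

variable {α β : Type*} {G : SimpleGraph α} {H : SimpleGraph β} {f₁ : α → ℕ} {f₂ : β → ℕ}

lemma defended_strongProd_of_left (h₁ : IsRDRD G f₁) (h₂ : IsRDRD H f₂) {u : α} (v : β)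
    (hu : f₁ u = 0) :
    DoubleRomanDefended (strongProd G H) (fun p => prodLabel (f₁ p.1) (f₂ p.2))
      (u, v) := by
  obtain ⟨v', hv', hv'2⟩ := h₂.exists_adj_or_eq_two_le v
  refine (h₁.defended hu).map (·, v') (Prod.mk_left_injective v')
    (fun u' hu' => strongProd_adj_of_adj_left hu' hv') fun u' hu'2 => ?_
  have := h₁.1 u'; have := h₂.1 v'
  simp only [prodLabel.eq_max hu'2 hv'2]
  omega

lemma defended_strongProd_of_right (h₁ : IsRDRD G f₁) (h₂ : IsRDRD H f₂) (u : α) {v : β}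
    (hv : f₂ v = 0) :
    DoubleRomanDefended (strongProd G H) (fun p => prodLabel (f₁ p.1) (f₂ p.2))
      (u, v) := by
  obtain ⟨u', hu', hu'2⟩ := h₁.exists_adj_or_eq_two_le u
  refine (h₂.defended hv).map (u', ·) (Prod.mk_right_injective u')
    (fun v' hv' => strongProd_adj_of_adj_right hu' hv') fun v' hv'2 => ?_
  have := h₁.1 u'; have := h₂.1 v'
  simp only [prodLabel.eq_max hu'2 hv'2]
  omega

lemma strongProd_prodLabel (h₁ : IsRDRD G f₁) (h₂ : IsRDRD H f₂) :
    IsRDRD (strongProd G H) (fun p => prodLabel (f₁ p.1) (f₂ p.2)) := by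
  refine ⟨fun ⟨u, v⟩ => prodLabel.le_three (h₁.1 u) (h₂.1 v), ?_, ?_, ?_⟩
  · rintro ⟨u, v⟩ h0
    rcases prodLabel.eq_zero_iff.1 h0 with hu | hv
    · exact h₁.defended_strongProd_of_left h₂ v hu
    · exact h₁.defended_strongProd_of_right h₂ u hv
  · rintro ⟨u, v⟩ h1
    rcases prodLabel.eq_one h1 with hu | hv
    · obtain ⟨u', hu', hu'2⟩ := h₁.2.2.1 u hu
      obtain ⟨v', hv', hv'2⟩ := h₂.exists_adj_or_eq_two_le v
      refine ⟨(u', v'), strongProd_adj_of_adj_left hu' hv', ?_⟩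
      simp only [prodLabel.eq_max hu'2 hv'2]
      omega
    · obtain ⟨v', hv', hv'2⟩ := h₂.2.2.1 v hv
      obtain ⟨u', hu', hu'2⟩ := h₁.exists_adj_or_eq_two_le u
      refine ⟨(u', v'), strongProd_adj_of_adj_right hu' hv', ?_⟩
      simp only [prodLabel.eq_max hu'2 hv'2]
      omega
  · rintro ⟨u, v⟩ h0
    rcases prodLabel.eq_zero_iff.1 h0 with hu | hv
    · obtain ⟨u', hu', hu'0⟩ := h₁.2.2.2 u hu
      exact ⟨(u', v), strongProd_adj_of_adj_left hu' (.inr rfl),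
        prodLabel.eq_zero_iff.2 (.inl hu'0)⟩
    · obtain ⟨v', hv', hv'0⟩ := h₂.2.2.2 v hv
      exact ⟨(u, v'), strongProd_adj_of_adj_right (.inr rfl) hv',
        prodLabel.eq_zero_iff.2 (.inr hv'0)⟩

end IsRDRD

section Counting

variable {α β M : Type*} [Fintype α] [Fintype β] [AddCommMonoid M]

lemma sum_comp_eq_sum_range_card_nsmul {f : α → ℕ} {n : ℕ} (hf : ∀ a, f a < n)
    (g : ℕ → M) :
    ∑ a, g (f a) = ∑ i ∈ range n, #{a | f a = i} • g i := by
  rw [← sum_fiberwise_of_maps_to' fun a _ => mem_range.2 (hf a)]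
  simp only [sum_const]

lemma sum_prod_comp_eq_sum_range_card_nsmul {f₁ : α → ℕ} {f₂ : β → ℕ} {n m : ℕ}
    (hf₁ : ∀ a, f₁ a < n) (hf₂ : ∀ b, f₂ b < m) (g : ℕ → ℕ → M) :
    ∑ p : α × β, g (f₁ p.1) (f₂ p.2) =
      ∑ i ∈ range n, ∑ j ∈ range m, (#{a | f₁ a = i} * #{b | f₂ b = j}) • g i j := by
  simp only [Fintype.sum_prod_type, sum_comp_eq_sum_range_card_nsmul hf₂,
    sum_comp_eq_sum_range_card_nsmul hf₁ fun i => ∑ j ∈ range m, #{b | f₂ b = j} • g i j,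
    smul_sum, mul_smul]

end Counting

theorem stmt2_general {α β : Type*} [Fintype α] [Fintype β]
    (G : SimpleGraph α) (H : SimpleGraph β)
    (f₁ : α → ℕ) (hf₁ : IsRDRD G f₁) (hf₁min : ∑ v, f₁ v = gammaRdR G)
    (f₂ : β → ℕ) (hf₂ : IsRDRD H f₂) (hf₂min : ∑ v, f₂ v = gammaRdR H)
    (A : ℕ → ℕ) (B : ℕ → ℕ)
    (hA : ∀ i, A i = (Finset.univ.filter fun v => f₁ v = i).card)
    (hB : ∀ i, B i = (Finset.univ.filter fun v => f₂ v = i).card) :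
    (gammaRdR (strongProd G H) : ℤ) ≤
      (gammaRdR G : ℤ) * gammaRdR H
        - 6 * A 3 * B 3 - 3 * A 3 * B 2 - 2 * A 3 * B 1
        - 3 * A 2 * B 3 - 2 * A 2 * B 2 - A 2 * B 1
        - A 1 * B 2 - 2 * A 1 * B 3 := by
  have hγG : (gammaRdR G : ℤ) = ∑ i ∈ range 4, (A i : ℤ) * i := by
    rw [← hf₁min, Nat.cast_sum, sum_comp_eq_sum_range_card_nsmul hf₁.lt_four]
    simp only [nsmul_eq_mul, hA]
  have hγH : (gammaRdR H : ℤ) = ∑ j ∈ range 4, (B j : ℤ) * j := by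
    rw [← hf₂min, Nat.cast_sum, sum_comp_eq_sum_range_card_nsmul hf₂.lt_four]
    simp only [nsmul_eq_mul, hB]
  calc (gammaRdR (strongProd G H) : ℤ)
      ≤ ∑ p : α × β, (prodLabel (f₁ p.1) (f₂ p.2) : ℤ) := by
        exact_mod_cast gammaRdR_le (hf₁.strongProd_prodLabel hf₂)
    _ = ∑ i ∈ range 4, ∑ j ∈ range 4, (A i : ℤ) * B j * prodLabel i j := by
        rw [sum_prod_comp_eq_sum_range_card_nsmul hf₁.lt_four hf₂.lt_four
          fun i j => (prodLabel i j : ℤ)]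
        simp only [nsmul_eq_mul, Nat.cast_mul, hA, hB]
    _ = _ := by
        rw [hγG, hγH]
        simp only [sum_range_succ, sum_range_zero, prodLabel]
        norm_num
        ring

theorem stmt2 {α β : Type*} [Fintype α] [Fintype β] [DecidableEq α] [DecidableEq β]
    (G : SimpleGraph α) (H : SimpleGraph β)
    (hG : G.Connected) (hH : H.Connected)
    (f₁ : α → ℕ) (hf₁ : IsRDRD G f₁) (hf₁min : ∑ v, f₁ v = gammaRdR G)
    (f₂ : β → ℕ) (hf₂ : IsRDRD H f₂) (hf₂min : ∑ v, f₂ v = gammaRdR H)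
    (A : ℕ → ℕ) (B : ℕ → ℕ)
    (hA : ∀ i, A i = (Finset.univ.filter fun v => f₁ v = i).card)
    (hB : ∀ i, B i = (Finset.univ.filter fun v => f₂ v = i).card) :
    (gammaRdR (strongProd G H) : ℤ) ≤
      (gammaRdR G : ℤ) * gammaRdR H
        - 6 * A 3 * B 3 - 3 * A 3 * B 2 - 2 * A 3 * B 1
        - 3 * A 2 * B 3 - 2 * A 2 * B 2 - A 2 * B 1
        - A 1 * B 2 - 2 * A 1 * B 3 :=
  stmt2_general G H f₁ hf₁ hf₁min f₂ hf₂ hf₂min A B hA hB
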